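/- A dcpo L is strongly continuous if and only if L is continuous and the strong Scott topology coincides with the Scott topology: σ_s(L) = σ(L). -/

import Mathlib

open Set

variable {L : Type*}

/-- A directed subset: nonempty and directed under `≤`. -/
def DirSet [Preorder L] (D : Set L) : Prop := D.Nonempty ∧ DirectedOn (· ≤ ·) D

/-- Strongly Scott open sets (the family `σ^s(L)`). -/
def StronglyScottOpen [Preorder L] [SupSet L] (U : Set L) : Prop :=
  IsUpperSet U ∧ ∀ D : Set L, DirSet D → ∀ x : L,
    Ici (sSup D) ∩ Ici x ⊆ U → ∃ d ∈ D, Ici d ∩ Ici x ⊆ U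

/-- The strong Scott topology `σ_s(L)`, generated by the strongly Scott open sets. -/
def strongScott (L : Type*) [Preorder L] [SupSet L] : TopologicalSpace L :=
  TopologicalSpace.generateFrom {U | StronglyScottOpen U}

/-- Scott open sets. -/
def ScottOpen [Preorder L] [SupSet L] (U : Set L) : Prop :=
  IsUpperSet U ∧ ∀ D : Set L, DirSet D → sSup D ∈ U → (D ∩ U).Nonempty

/-- The Scott topology `σ(L)`. -/
def scottTop (L : Type*) [Preorder L] [SupSet L] : TopologicalSpace L :=
  TopologicalSpace.generateFrom {U | ScottOpen U}

/-- The upper topology `υ(L)`. -/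
def upperTop (L : Type*) [Preorder L] : TopologicalSpace L :=
  TopologicalSpace.generateFrom {U | ∃ x : L, U = (Iic x)ᶜ}

/-- The lower topology `ω(L)`. -/
def lowerTop (L : Type*) [Preorder L] : TopologicalSpace L :=
  TopologicalSpace.generateFrom {U | ∃ x : L, U = (Ici x)ᶜ}

/-- The strong way-below relation `x ≪_s y`. -/
def SWayBelow [Preorder L] (x y : L) : Prop :=
  ∀ D : Set L, DirSet D → ∀ a : L,
    (⋂ d ∈ D, Ici d) ∩ Ici a ⊆ Ici y → ∃ d ∈ D, Ici d ∩ Ici a ⊆ Ici x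

/-- The way-below relation `x ≪ y`. -/
def WayBelow [Preorder L] [SupSet L] (x y : L) : Prop :=
  ∀ D : Set L, DirSet D → y ≤ sSup D → ∃ d ∈ D, x ≤ d

/-- `X` with topology `t` is a C-space (w.r.t. the order of `L`). -/
def IsCSpace [Preorder L] (t : TopologicalSpace L) : Prop :=
  ∀ U : Set L, @IsOpen _ (t) U → ∀ x ∈ U, ∃ y ∈ U,
    x ∈ @interior L t (Ici y) ∧ Ici y ⊆ U

/-- `L` is a strongly continuous domain. -/
def StronglyContinuousDomain (L : Type*) [Preorder L] [SupSet L] : Prop :=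
  IsCSpace (strongScott L)

/-- `L` is a continuous domain. -/
def ContinuousDomain (L : Type*) [Preorder L] [SupSet L] : Prop :=
  ∀ x : L, DirSet {y | WayBelow y x} ∧ IsLUB {y | WayBelow y x} x

/-- `L` is a hypercontinuous domain. -/
def HypercontinuousDomain (L : Type*) [Preorder L] : Prop :=
  ∀ x : L, DirSet {y | x ∈ @interior L (upperTop L) (Ici y)} ∧
    IsLUB {y | x ∈ @interior L (upperTop L) (Ici y)} x

/-- The strong Lawson topology `λ_s(L)`: common refinement of `σ_s(L)` and `ω(L)`. -/
def strongLawson (L : Type*) [Preorder L] [SupSet L] : TopologicalSpace L :=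
  TopologicalSpace.generateFrom
    {U | @IsOpen _ (strongScott L) U ∨ @IsOpen _ (lowerTop L) U}

/-
A C-space topology `t` on a dcpo with the complements `(↓b)ᶜ` open makes the sets
`{y | x ∈ int ↑y}` directed with supremum `x`; when all `t`-open sets are Scott open these
sets consist of elements way below `x`, so `L` is continuous, and every Scott open set is
`t`-open. Both hypotheses hold for `σ_s(L)`: the sets `(↓b)ᶜ` are strongly Scott open, and
strongly Scott open sets are Scott open. This gives continuity and `σ_s(L) = σ(L)`. Conversely, in a continuous domain interpolation makes each
`⇑y` Scott open, so `σ(L)` is a C-space.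
-/

open Topology

section Preorder

variable [Preorder L] {t : TopologicalSpace L}

lemma IsCSpace.dirSet_interior_Ici (h : IsCSpace t) (x : L) :
    DirSet {y | x ∈ @interior L t (Ici y)} := by
  let _ := t
  refine ⟨?_, fun y₁ hy₁ y₂ hy₂ => ?_⟩
  · obtain ⟨y, -, hy, -⟩ := h univ isOpen_univ x trivial
    exact ⟨y, hy⟩
  · obtain ⟨z, hz, hxz, -⟩ := h _ (isOpen_interior.inter isOpen_interior) x ⟨hy₁, hy₂⟩
    exact ⟨z, hxz, interior_subset hz.1, interior_subset hz.2⟩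

lemma IsCSpace.isLUB_interior_Ici (h : IsCSpace t) (hIic : ∀ b : L, IsOpen[t] (Iic b)ᶜ)
    (x : L) : IsLUB {y | x ∈ @interior L t (Ici y)} x := by
  let _ := t
  refine ⟨fun y hy => interior_subset hy, fun b hb => ?_⟩
  by_contra hxb
  obtain ⟨y, hyb, hxy, -⟩ := h _ (hIic b) x hxb
  exact hyb (hb hxy)

end Preorder

section SupSet

variable [Preorder L] [SupSet L]

lemma scottOpen_univ : ScottOpen (univ : Set L) :=
  ⟨isUpperSet_univ, fun _ hD _ => hD.1.imp fun _ hd => ⟨hd, trivial⟩⟩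

lemma ScottOpen.inter {U V : Set L} (hU : ScottOpen U) (hV : ScottOpen V) :
    ScottOpen (U ∩ V) := by
  refine ⟨hU.1.inter hV.1, fun D hD hsup => ?_⟩
  obtain ⟨d₁, hd₁, hd₁U⟩ := hU.2 D hD hsup.1
  obtain ⟨d₂, hd₂, hd₂V⟩ := hV.2 D hD hsup.2
  obtain ⟨d, hd, h₁, h₂⟩ := hD.2 d₁ hd₁ d₂ hd₂
  exact ⟨d, hd, hU.1 h₁ hd₁U, hV.1 h₂ hd₂V⟩

lemma scottOpen_sUnion {S : Set (Set L)} (hS : ∀ U ∈ S, ScottOpen U) : ScottOpen (⋃₀ S) := by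
  refine ⟨isUpperSet_sUnion fun U hU => (hS U hU).1, fun D hD ⟨U, hUS, hsup⟩ => ?_⟩
  obtain ⟨d, hd, hdU⟩ := (hS U hUS).2 D hD hsup
  exact ⟨d, hd, U, hUS, hdU⟩

lemma isOpen_scottTop_iff {U : Set L} : IsOpen[scottTop L] U ↔ ScottOpen U := by
  refine ⟨fun hU => ?_, fun hU => TopologicalSpace.GenerateOpen.basic U hU⟩
  induction hU with
  | basic U hU => exact hU
  | univ => exact scottOpen_univ
  | inter U V _ _ hU hV => exact hU.inter hV
  | sUnion S _ hS => exact scottOpen_sUnion hS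

lemma StronglyScottOpen.scottOpen {U : Set L} (hU : StronglyScottOpen U) : ScottOpen U := by
  refine ⟨hU.1, fun D hD hsup => ?_⟩
  obtain ⟨d₀, hd₀⟩ := hD.1
  obtain ⟨d, hd, hdU⟩ := hU.2 D hD d₀ fun z hz => hU.1 hz.1 hsup
  obtain ⟨e, he, hde, hd₀e⟩ := hD.2 d hd d₀ hd₀
  exact ⟨e, he, hdU ⟨hde, hd₀e⟩⟩

lemma scottTop_le_strongScott : scottTop L ≤ strongScott L :=
  le_generateFrom fun _ hU => isOpen_scottTop_iff.2 (StronglyScottOpen.scottOpen hU)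

lemma ScottOpen.wayBelow {V : Set L} {x y : L} (hV : ScottOpen V) (hx : x ∈ V)
    (hVy : V ⊆ Ici y) : WayBelow y x := fun D hD hxD =>
  (hV.2 D hD (hV.1 hxD hx)).imp fun _ hd => ⟨hd.1, hVy hd.2⟩

lemma WayBelow.trans_le {x x' y : L} (h : WayBelow y x) (hx : x ≤ x') : WayBelow y x' :=
  fun D hD hx'D => h D hD (hx.trans hx'D)

lemma wayBelow_of_le_of_wayBelow {x y u : L} (hyu : y ≤ u) (h : WayBelow u x) :
    WayBelow y x :=
  fun D hD hxD => (h D hD hxD).imp fun _ hd => ⟨hd.1, hyu.trans hd.2⟩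

end SupSet

section CompletePartialOrder

variable [CompletePartialOrder L]

lemma stronglyScottOpen_compl_Iic (b : L) : StronglyScottOpen (Iic b)ᶜ := by
  refine ⟨fun z w hzw hz hw => hz (hzw.trans hw), fun D hD a h => ?_⟩
  by_contra! hD_le
  have hbelow : ∀ d ∈ D, ∃ z, d ≤ z ∧ a ≤ z ∧ z ≤ b := fun d hd => by
    obtain ⟨z, hz, hzb⟩ := not_subset.1 (hD_le d hd)
    exact ⟨z, hz.1, hz.2, not_not.1 hzb⟩
  have hsup : sSup D ≤ b := (CompletePartialOrder.lubOfDirected D hD.2).2 fun d hd =>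
    let ⟨_, hdz, _, hzb⟩ := hbelow d hd; hdz.trans hzb
  obtain ⟨_, _, haz, hzb⟩ := hbelow _ hD.1.some_mem
  exact h ⟨hsup, haz.trans hzb⟩ le_rfl

lemma WayBelow.exists_le_of_isLUB {x y : L} {W : Set L} (h : WayBelow y x) (hW : DirSet W)
    (hWx : IsLUB W x) : ∃ d ∈ W, y ≤ d :=
  h W hW ((CompletePartialOrder.lubOfDirected W hW.2).unique hWx).ge

lemma dirSet_and_isLUB_wayBelow_of_subset {x : L} {W : Set L} (hW : DirSet W)
    (hWx : IsLUB W x) (hsub : W ⊆ {y | WayBelow y x}) :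
    DirSet {y | WayBelow y x} ∧ IsLUB {y | WayBelow y x} x := by
  refine ⟨⟨hW.1.mono hsub, fun y₁ hy₁ y₂ hy₂ => ?_⟩, fun y hy => ?_,
    fun b hb => hWx.2 fun y hy => hb (hsub hy)⟩
  · obtain ⟨d₁, hd₁, hy₁d₁⟩ := hy₁.exists_le_of_isLUB hW hWx
    obtain ⟨d₂, hd₂, hy₂d₂⟩ := hy₂.exists_le_of_isLUB hW hWx
    obtain ⟨d, hd, hd₁d, hd₂d⟩ := hW.2 d₁ hd₁ d₂ hd₂
    exact ⟨d, hsub hd, hy₁d₁.trans hd₁d, hy₂d₂.trans hd₂d⟩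
  · obtain ⟨d, hd, hyd⟩ := hy.exists_le_of_isLUB hW hWx
    exact hyd.trans (hWx.1 hd)

section IsCSpace

variable {t : TopologicalSpace L} (h : IsCSpace t) (hIic : ∀ b : L, IsOpen[t] (Iic b)ᶜ)
include h hIic

lemma IsCSpace.continuousDomain (hscott : ∀ U, IsOpen[t] U → ScottOpen U) :
    ContinuousDomain L := fun x =>
  dirSet_and_isLUB_wayBelow_of_subset (h.dirSet_interior_Ici x) (h.isLUB_interior_Ici hIic x)
    fun _ hy => (hscott _ (@isOpen_interior L t _)).wayBelow hy (@interior_subset L t _)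

lemma IsCSpace.isOpen_of_scottOpen {U : Set L} (hU : ScottOpen U) : IsOpen[t] U := by
  let _ := t
  refine isOpen_iff_forall_mem_open.2 fun x hx => ?_
  have hsup : sSup {y | x ∈ interior (Ici y)} = x :=
    (CompletePartialOrder.lubOfDirected _ (h.dirSet_interior_Ici x).2).unique
      (h.isLUB_interior_Ici hIic x)
  obtain ⟨y, hxy, hyU⟩ := hU.2 _ (h.dirSet_interior_Ici x) (by rwa [hsup])
  exact ⟨interior (Ici y), interior_subset.trans fun z hz => hU.1 hz hyU, isOpen_interior, hxy⟩

end IsCSpace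

namespace ContinuousDomain

variable (hc : ContinuousDomain L)
include hc

lemma sSup_wayBelow (x : L) : sSup {y | WayBelow y x} = x :=
  (CompletePartialOrder.lubOfDirected _ (hc x).1.2).unique (hc x).2

lemma exists_wayBelow_wayBelow {x y : L} (h : WayBelow y x) :
    ∃ z, WayBelow y z ∧ WayBelow z x := by
  set E : Set L := {u | ∃ z, WayBelow u z ∧ WayBelow z x}
  have hE : DirSet E := by
    refine ⟨?_, ?_⟩
    · obtain ⟨z, hz⟩ := (hc x).1.1
      obtain ⟨u, hu⟩ := (hc z).1.1
      exact ⟨u, z, hu, hz⟩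
    · rintro u₁ ⟨z₁, hu₁, hz₁⟩ u₂ ⟨z₂, hu₂, hz₂⟩
      obtain ⟨z, hz, hz₁z, hz₂z⟩ := (hc x).1.2 z₁ hz₁ z₂ hz₂
      obtain ⟨u, hu, hu₁u, hu₂u⟩ :=
        (hc z).1.2 u₁ (hu₁.trans_le hz₁z) u₂ (hu₂.trans_le hz₂z)
      exact ⟨u, ⟨z, hu, hz⟩, hu₁u, hu₂u⟩
  have hEx : IsLUB E x := by
    refine ⟨fun u ⟨z, huz, hzx⟩ => ((hc z).2.1 huz).trans ((hc x).2.1 hzx), fun b hb => ?_⟩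
    exact (hc x).2.2 fun z hz => (hc z).2.2 fun u hu => hb ⟨z, hu, hz⟩
  obtain ⟨u, ⟨z, huz, hzx⟩, hyu⟩ := h.exists_le_of_isLUB hE hEx
  exact ⟨z, wayBelow_of_le_of_wayBelow hyu huz, hzx⟩

lemma scottOpen_wayBelow (y : L) : ScottOpen {z | WayBelow y z} := by
  refine ⟨fun _ _ hab ha => ha.trans_le hab, fun D hD hsup => ?_⟩
  obtain ⟨w, hyw, hwD⟩ := hc.exists_wayBelow_wayBelow hsup
  obtain ⟨d, hd, hwd⟩ := hwD D hD le_rfl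
  exact ⟨d, hd, hyw.trans_le hwd⟩

lemma isCSpace_scottTop : IsCSpace (scottTop L) := by
  let _ := scottTop L
  intro U hU x hx
  have hU : ScottOpen U := isOpen_scottTop_iff.1 hU
  obtain ⟨y, hyx, hyU⟩ := hU.2 _ (hc x).1 ((hc.sSup_wayBelow x).symm ▸ hx)
  refine ⟨y, hyU, mem_interior.2 ⟨_, fun z hz => (hc z).2.1 hz, ?_, hyx⟩,
    fun z hz => hU.1 hz hyU⟩
  exact isOpen_scottTop_iff.2 (hc.scottOpen_wayBelow y)

end ContinuousDomain

end CompletePartialOrder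

theorem stronglyContinuous_iff_continuous_and_strongScott_eq_scott
    [CompletePartialOrder L] :
    StronglyContinuousDomain L ↔
      ContinuousDomain L ∧ strongScott L = scottTop L := by
  have hIic (b : L) : IsOpen[strongScott L] (Iic b)ᶜ :=
    TopologicalSpace.GenerateOpen.basic _ (stronglyScottOpen_compl_Iic b)
  have hscott (U : Set L) (hU : IsOpen[strongScott L] U) : ScottOpen U :=
    isOpen_scottTop_iff.1 (scottTop_le_strongScott U hU)
  constructor
  · intro h
    exact ⟨h.continuousDomain hIic hscott,
      le_antisymm (le_generateFrom fun _ hU => h.isOpen_of_scottOpen hIic hU)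
        scottTop_le_strongScott⟩
  · rintro ⟨hc, heq⟩
    rw [StronglyContinuousDomain, heq]
    exact hc.isCSpace_scottTop
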